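/- Let X be a real Banach space and X* its dual, equipped with the weak* topology σ(X*, X). Suppose every nonempty weak*-compact convex set in X* is almost remotal (its set D(K) of points of X* admitting a farthest point in K contains a dense Gδ subset of X*). Then X* has the w*-MIP (every weak*-compact convex set in X* is the intersection of all closed dual balls containing it) if and only if every nonempty weak*-compact convex set in X* is the weak*-closed convex hull of its set of farthest points. -/

import Mathlib

open Metric Set Pointwise

/-- The farthest distance map `r_K(x) = sup {‖z - x‖ : z ∈ K}`. -/
noncomputable def rFar {X : Type*} [NormedAddCommGroup X] (K : Set X) (x : X) : ℝ :=
  sSup ((fun z => ‖z - x‖) '' K)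

/-- `Q_K(x)`: the set of points of `K` farthest from `x`. -/
def QFar {X : Type*} [NormedAddCommGroup X] (K : Set X) (x : X) : Set X :=
  {z ∈ K | ‖z - x‖ = rFar K x}

/-- `D(K)`: the set of points admitting a farthest point in `K`. -/
def DFar {X : Type*} [NormedAddCommGroup X] (K : Set X) : Set X :=
  {x | (QFar K x).Nonempty}

/-- `b(K)`: the set of farthest points of `K`. -/
def farPoints {X : Type*} [NormedAddCommGroup X] (K : Set X) : Set X :=
  ⋃ x ∈ DFar K, QFar K x

/-- The crescent `C(K, x, α) = {z ∈ K : ‖z - x‖ > r_K(x) - α}`. -/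
def crescent {X : Type*} [NormedAddCommGroup X] (K : Set X) (x : X) (α : ℝ) : Set X :=
  {z ∈ K | rFar K x - α < ‖z - x‖}

/-- Property (R): every crescent of `K` contains a farthest point of `K`. -/
def PropR {X : Type*} [NormedAddCommGroup X] (K : Set X) : Prop :=
  ∀ (x : X) (α : ℝ), 0 < α → ∃ z ∈ crescent K x α, z ∈ farPoints K

/-- A set is admissible if it is the intersection of all closed balls containing it. -/
def Admissible {X : Type*} [NormedAddCommGroup X] (K : Set X) : Prop :=
  K = ⋂ p ∈ {p : X × ℝ | K ⊆ closedBall p.1 p.2}, closedBall p.1 p.2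

/-- The weak* topology `σ(X*, X)` on the dual `X* = X →L[ℝ] ℝ`. -/
def wstarTop (X : Type*) [NormedAddCommGroup X] [NormedSpace ℝ X] :
    TopologicalSpace (X →L[ℝ] ℝ) :=
  TopologicalSpace.induced (fun f : X →L[ℝ] ℝ => fun x : X => f x) inferInstance

/-!
If `D(K)` is dense, every crescent of `K` contains a farthest point of `K`, so a closed ball
containing `b(K)` contains `K`. Under the w*-MIP the w*-closed convex hull of `b(K)` is an
intersection of closed balls, hence it is all of `K`.

Conversely, let `A` be the ball hull of `K`, `s > 0`, `B = K + s·B_{X*}` and `W` the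
w*-compact convex join of `A` and `B`. Since `r_A ≤ r_K` and `r_W = r_B = r_K + s`, a point
`(1 - v) a + v b` of `W` is at distance at most `r_K(y) + v s` from `y`, so every farthest point
of `W` lies in `B`. Writing `W` as the w*-closed convex hull of its farthest points gives
`A ⊆ W ⊆ B`, and letting `s → 0` gives `A ⊆ K`.
-/

open Bornology

section FarthestPoints

variable {E : Type*} [NormedAddCommGroup E] {K L A : Set E} {x y z : E} {r s : ℝ}

lemma farPoints_subset (K : Set E) : farPoints K ⊆ K :=
  iUnion₂_subset fun _ _ _ hz => hz.1

lemma bddAbove_norm_sub_image (hK : IsBounded K) (x : E) :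
    BddAbove ((fun z => ‖z - x‖) '' K) := by
  obtain ⟨r, hr⟩ := (isBounded_iff_subset_closedBall x).1 hK
  exact ⟨r, forall_mem_image.2 fun z hz => mem_closedBall_iff_norm.1 (hr hz)⟩

lemma norm_sub_le_rFar (hK : IsBounded K) (hz : z ∈ K) (x : E) : ‖z - x‖ ≤ rFar K x :=
  le_csSup (bddAbove_norm_sub_image hK x) (mem_image_of_mem _ hz)

lemma rFar_le (hK : K.Nonempty) (h : ∀ z ∈ K, ‖z - x‖ ≤ r) : rFar K x ≤ r :=
  csSup_le (hK.image _) (forall_mem_image.2 h)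

lemma rFar_mono (hL : IsBounded L) (hK : K.Nonempty) (hKL : K ⊆ L) : rFar K x ≤ rFar L x :=
  rFar_le hK fun _ hz => norm_sub_le_rFar hL (hKL hz) x

lemma rFar_le_rFar_add_norm_sub (hK : IsBounded K) (hne : K.Nonempty) (x y : E) :
    rFar K x ≤ rFar K y + ‖y - x‖ :=
  rFar_le hne fun z hz => (norm_sub_le_norm_sub_add_norm_sub z y x).trans
    (add_le_add_left (norm_sub_le_rFar hK hz y) _)

lemma propR_of_dense_DFar (hK : IsBounded K) (hne : K.Nonempty) (hD : Dense (DFar K)) :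
    PropR K := by
  intro x α hα
  obtain ⟨y, ⟨z, hz⟩, hxy⟩ := Metric.mem_closure_iff.1 (hD x) (α / 2) (half_pos hα)
  refine ⟨z, ⟨hz.1, ?_⟩, mem_iUnion₂.2 ⟨y, ⟨z, hz⟩, hz⟩⟩
  rw [dist_eq_norm, norm_sub_rev] at hxy
  have hr := rFar_le_rFar_add_norm_sub hK hne x y
  have hzy := norm_sub_le_norm_sub_add_norm_sub z x y
  rw [hz.2, norm_sub_rev x y] at hzy
  linarith

def ballHull (K : Set E) : Set E :=
  ⋂ p ∈ {p : E × ℝ | K ⊆ closedBall p.1 p.2}, closedBall p.1 p.2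

lemma subset_ballHull (K : Set E) : K ⊆ ballHull K :=
  subset_iInter₂ fun _ hp => hp

lemma ballHull_subset_closedBall (h : K ⊆ closedBall x r) : ballHull K ⊆ closedBall x r :=
  biInter_subset_of_mem (t := fun p : E × ℝ => closedBall p.1 p.2) (x := (x, r)) h

lemma ballHull_empty : ballHull (∅ : Set E) = ∅ :=
  subset_empty_iff.1 <| (ballHull_subset_closedBall (empty_subset (closedBall 0 (-1)))).trans
    (closedBall_eq_empty.2 (by norm_num)).subset

lemma Bornology.IsBounded.ballHull (hK : IsBounded K) : IsBounded (ballHull K) := by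
  obtain ⟨r, hr⟩ := (isBounded_iff_subset_closedBall 0).1 hK
  exact isBounded_closedBall.subset (ballHull_subset_closedBall hr)

lemma norm_sub_le_rFar_of_mem_ballHull (hK : IsBounded K) (ha : x ∈ ballHull K) (y : E) :
    ‖x - y‖ ≤ rFar K y :=
  mem_closedBall_iff_norm.1 <| ballHull_subset_closedBall
    (fun _ hz => mem_closedBall_iff_norm.2 (norm_sub_le_rFar hK hz y)) ha

lemma convex_ballHull [NormedSpace ℝ E] (K : Set E) : Convex ℝ (ballHull K) :=
  convex_iInter₂ fun _ _ => convex_closedBall _ _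

lemma PropR.subset_ballHull (hK : IsBounded K) (hR : PropR K) (hL : farPoints K ⊆ L) :
    K ⊆ ballHull L := by
  intro x hx
  refine mem_iInter₂.2 fun p hLp => ?_
  by_contra hxp
  have hr : p.2 < ‖x - p.1‖ := lt_of_not_ge (mt mem_closedBall_iff_norm.2 hxp)
  obtain ⟨z, hzC, hzb⟩ := hR p.1 (rFar K p.1 - p.2) (by linarith [norm_sub_le_rFar hK hx p.1])
  have hzp := mem_closedBall_iff_norm.1 (hLp (hL hzb))
  linarith [hzC.2]

lemma subset_closure_of_forall_subset_add_closedBall {F : Type*} [SeminormedAddCommGroup F]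
    {K L : Set F} (h : ∀ s > 0, L ⊆ K + closedBall 0 s) : L ⊆ closure K := by
  rw [closure_eq_iInter_thickening]
  refine subset_iInter₂ fun δ hδ => ?_
  rw [← add_ball_zero]
  exact (h _ (half_pos hδ)).trans (add_subset_add_left (closedBall_subset_ball (half_lt_self hδ)))

variable [NormedSpace ℝ E] [Nontrivial E]

lemma exists_norm_add_eq (v : E) (hs : 0 ≤ s) : ∃ u ∈ closedBall (0 : E) s, ‖v + u‖ = ‖v‖ + s := by
  rcases eq_or_ne v 0 with rfl | hv
  · obtain ⟨u, hu⟩ := exists_norm_eq E hs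
    exact ⟨u, mem_closedBall_zero_iff.2 hu.le, by simp [hu]⟩
  have hv' := norm_pos_iff.2 hv
  have hnorm : ‖(s / ‖v‖) • v‖ = s := by
    rw [norm_smul_of_nonneg (by positivity), div_mul_cancel₀ _ hv'.ne']
  refine ⟨(s / ‖v‖) • v, mem_closedBall_zero_iff.2 hnorm.le, ?_⟩
  rw [(SameRay.sameRay_nonneg_smul_right v (by positivity)).norm_add, hnorm]

lemma rFar_add_closedBall (hK : IsBounded K) (hne : K.Nonempty) (hs : 0 ≤ s) (y : E) :
    rFar (K + closedBall 0 s) y = rFar K y + s := by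
  apply le_antisymm
  · refine rFar_le (hne.add (nonempty_closedBall.2 hs)) ?_
    rintro _ ⟨k, hk, u, hu, rfl⟩
    calc ‖k + u - y‖ = ‖(k - y) + u‖ := by rw [add_sub_right_comm]
      _ ≤ ‖k - y‖ + ‖u‖ := norm_add_le _ _
      _ ≤ rFar K y + s := add_le_add (norm_sub_le_rFar hK hk y) (mem_closedBall_zero_iff.1 hu)
  · suffices rFar K y ≤ rFar (K + closedBall 0 s) y - s by linarith
    refine rFar_le hne fun k hk => ?_
    obtain ⟨u, hu, hku⟩ := exists_norm_add_eq (k - y) hs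
    have := norm_sub_le_rFar (hK.add isBounded_closedBall) (add_mem_add hk hu) y
    rw [add_sub_right_comm, hku] at this
    linarith

lemma farPoints_convexJoin_subset (hK : IsBounded K) (hne : K.Nonempty) (hA : A ⊆ ballHull K)
    (hs : 0 < s) : farPoints (convexJoin ℝ A (K + closedBall 0 s)) ⊆ K + closedBall 0 s := by
  set B := K + closedBall (0 : E) s
  have hB : IsBounded B := hK.add isBounded_closedBall
  have hW : IsBounded (convexJoin ℝ A B) :=
    (isBounded_convexHull.2 ((hK.ballHull.subset hA).union hB)).subset
      (convexJoin_subset_convexHull A B)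
  intro z hz
  obtain ⟨y, -, hzW, hzy⟩ := mem_iUnion₂.1 hz
  obtain ⟨a, ha, b, hb, u, v, hu, hv, huv, rfl⟩ := mem_convexJoin.1 hzW
  have hlow : rFar K y + s ≤ ‖u • a + v • b - y‖ := by
    rw [hzy, ← rFar_add_closedBall hK hne hs.le]
    exact rFar_mono hW (hne.add (nonempty_closedBall.2 hs.le)) (subset_convexJoin_right ⟨a, ha⟩)
  have hup : ‖u • a + v • b - y‖ ≤ u * rFar K y + v * (rFar K y + s) := by
    obtain rfl : u = 1 - v := eq_sub_of_add_eq huv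
    calc ‖(1 - v) • a + v • b - y‖ = ‖(1 - v) • (a - y) + v • (b - y)‖ := by congr 1; module
      _ ≤ (1 - v) * ‖a - y‖ + v * ‖b - y‖ := by
        grw [norm_add_le, norm_smul_of_nonneg hu, norm_smul_of_nonneg hv]
      _ ≤ (1 - v) * rFar K y + v * (rFar K y + s) := by
        gcongr
        · exact norm_sub_le_rFar_of_mem_ballHull hK (hA ha) y
        · exact (norm_sub_le_rFar hB hb y).trans_eq (rFar_add_closedBall hK hne hs.le y)
  have hr : u * rFar K y + v * rFar K y = rFar K y := by rw [← add_mul, huv, one_mul]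
  have hsv : s ≤ v * s := by linarith
  have hv1 : v = 1 := le_antisymm (by linarith) (le_of_mul_le_mul_right (by linarith) hs)
  obtain rfl : u = 0 := by linarith
  rwa [hv1, zero_smul, one_smul, zero_add]

end FarthestPoints

protected theorem IsCompact.convexJoin {E : Type*} [AddCommGroup E] [Module ℝ E]
    [TopologicalSpace E] [ContinuousAdd E] [ContinuousSMul ℝ E] {s t : Set E}
    (hs : IsCompact s) (ht : IsCompact t) :
    IsCompact (convexJoin ℝ s t) := by
  have : convexJoin ℝ s t =
      (fun p : E × E × ℝ => (1 - p.2.2) • p.1 + p.2.2 • p.2.1) '' (s ×ˢ t ×ˢ Icc 0 1) := by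
    ext z
    simp only [mem_convexJoin, segment_eq_image, mem_image, mem_prod, Prod.exists]
    aesop
  rw [this]
  exact (hs.prod (ht.prod isCompact_Icc)).image (by fun_prop)

section WeakStar

/- `toStrongDual ⁻¹' K` is `K` seen in `WeakDual ℝ X`, whose topology is definitionally
`wstarTop X`; this is what lets hypotheses stated with `wstarTop X` and the `WeakDual` API be
passed to each other without conversion. -/

open WeakDual (toStrongDual)

variable {X : Type*} [NormedAddCommGroup X] [NormedSpace ℝ X] {K : Set (X →L[ℝ] ℝ)}

lemma isBounded_of_isCompact_preimage_toStrongDual [CompleteSpace X]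
    (hK : IsCompact (toStrongDual ⁻¹' K)) : IsBounded K :=
  WeakDual.isBounded_iff_isVonNBounded.2 (hK.isVonNBounded ℝ)

lemma isClosed_of_isCompact_preimage_toStrongDual (hK : IsCompact (toStrongDual ⁻¹' K)) :
    IsClosed K :=
  hK.isClosed.preimage NormedSpace.Dual.toWeakDual_continuous

lemma isCompact_preimage_toStrongDual_ballHull (hK : IsBounded K) :
    IsCompact (toStrongDual ⁻¹' ballHull K) :=
  WeakDual.isCompact_of_bounded_of_closed hK.ballHull
    (isClosed_biInter fun p _ => WeakDual.isClosed_closedBall p.1 p.2)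

lemma eq_closure_convexHull_farPoints_of_propR [CompleteSpace X]
    (hMIP : ∀ L : Set (X →L[ℝ] ℝ), @IsCompact _ (wstarTop X) L → Convex ℝ L → Admissible L)
    (hK : IsCompact (toStrongDual ⁻¹' K)) (hKv : Convex ℝ K) (hR : PropR K) :
    K = @closure _ (wstarTop X) (convexHull ℝ (farPoints K)) := by
  set L := @closure _ (wstarTop X) (convexHull ℝ (farPoints K))
  have hLK : L ⊆ K :=
    closure_minimal (X := WeakDual ℝ X) (convexHull_min (farPoints_subset K) hKv) hK.isClosed
  have hLc : IsCompact (toStrongDual ⁻¹' L) := hK.of_isClosed_subset isClosed_closure hLK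
  have hLv : Convex ℝ L := Convex.closure (E := WeakDual ℝ X) (convex_convexHull ℝ _)
  refine hLK.antisymm' ?_
  calc K ⊆ ballHull L := hR.subset_ballHull (isBounded_of_isCompact_preimage_toStrongDual hK)
        ((subset_convexHull ℝ _).trans (subset_closure (X := WeakDual ℝ X)))
    _ = L := (hMIP L hLc hLv).symm

lemma ballHull_subset_add_closedBall [CompleteSpace X] [Nontrivial (X →L[ℝ] ℝ)]
    (hRep : ∀ W : Set (X →L[ℝ] ℝ), @IsCompact _ (wstarTop X) W → Convex ℝ W → W.Nonempty →
      W = @closure _ (wstarTop X) (convexHull ℝ (farPoints W)))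
    (hK : IsCompact (toStrongDual ⁻¹' K)) (hKv : Convex ℝ K) (hne : K.Nonempty)
    {s : ℝ} (hs : 0 < s) : ballHull K ⊆ K + closedBall 0 s := by
  have hKb := isBounded_of_isCompact_preimage_toStrongDual hK
  set B := K + closedBall (0 : X →L[ℝ] ℝ) s
  have hBc : IsCompact (toStrongDual ⁻¹' B) := hK.add (WeakDual.isCompact_closedBall 0 s)
  have hBv : Convex ℝ B := hKv.add (convex_closedBall 0 s)
  have hBne : B.Nonempty := hne.add (nonempty_closedBall.2 hs.le)
  set W := convexJoin ℝ (ballHull K) B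
  have hWc : IsCompact (toStrongDual ⁻¹' W) :=
    (isCompact_preimage_toStrongDual_ballHull hKb).convexJoin hBc
  have hWv : Convex ℝ W := (convex_ballHull K).convexJoin hBv
  have hWB : W ⊆ B := by
    rw [hRep W hWc hWv (hBne.mono (subset_convexJoin_right (hne.mono (subset_ballHull K))))]
    exact closure_minimal (X := WeakDual ℝ X)
      (convexHull_min (farPoints_convexJoin_subset hKb hne subset_rfl hs) hBv) hBc.isClosed
  exact (subset_convexJoin_left hBne).trans hWB

lemma admissible_of_forall_eq_closure_convexHull_farPoints [CompleteSpace X]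
    (hRep : ∀ W : Set (X →L[ℝ] ℝ), @IsCompact _ (wstarTop X) W → Convex ℝ W → W.Nonempty →
      W = @closure _ (wstarTop X) (convexHull ℝ (farPoints W)))
    (hK : IsCompact (toStrongDual ⁻¹' K)) (hKv : Convex ℝ K) : Admissible K := by
  rcases K.eq_empty_or_nonempty with rfl | hne
  · exact ballHull_empty.symm
  refine (subset_ballHull K).antisymm ?_
  rcases subsingleton_or_nontrivial (X →L[ℝ] ℝ) with _ | _
  · exact hne.eq_univ ▸ subset_univ _
  exact (subset_closure_of_forall_subset_add_closedBall fun s hs =>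
    ballHull_subset_add_closedBall hRep hK hKv hne hs).trans
      (isClosed_of_isCompact_preimage_toStrongDual hK).closure_subset

end WeakStar

/-- Theorem far2 (abstract form): if every nonempty w*-compact convex set in `X*` is almost
remotal, then `X*` has the w*-MIP iff every nonempty w*-compact convex set in `X*` is the
w*-closed convex hull of its farthest points. -/
theorem stmt_19 {X : Type*} [NormedAddCommGroup X] [NormedSpace ℝ X] [CompleteSpace X]
    (har : ∀ K : Set (X →L[ℝ] ℝ), @IsCompact _ (wstarTop X) K → Convex ℝ K → K.Nonempty →
      ∃ G : Set (X →L[ℝ] ℝ), G ⊆ DFar K ∧ Dense G ∧ IsGδ G) :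
    (∀ K : Set (X →L[ℝ] ℝ), @IsCompact _ (wstarTop X) K → Convex ℝ K → Admissible K) ↔
    (∀ K : Set (X →L[ℝ] ℝ), @IsCompact _ (wstarTop X) K → Convex ℝ K → K.Nonempty →
      K = @closure _ (wstarTop X) (convexHull ℝ (farPoints K))) := by
  refine ⟨fun hMIP K hK hKv hne => ?_, fun hRep K hK hKv => ?_⟩
  · obtain ⟨G, hGD, hG, -⟩ := har K hK hKv hne
    exact eq_closure_convexHull_farPoints_of_propR hMIP hK hKv <| propR_of_dense_DFar
      (isBounded_of_isCompact_preimage_toStrongDual hK) hne (hG.mono hGD)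
  · exact admissible_of_forall_eq_closure_convexHull_farPoints hRep hK hKv
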